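/- If F and H are unsatisfiable formulas over disjoint variable sets, then the tree obtained from an optimal backtracking search tree of F by replacing every empty subtree with an optimal backtracking search tree of H is an optimal backtracking search tree of the product F · H. -/
import Mathlib


/-- Propositional variables. -/
abbrev Var := ℕ
/-- A literal is a variable together with a sign. -/
abbrev Lit := Var × Bool
/-- A clause is a set of literals. -/
abbrev Clause := Set Lit
/-- A CNF formula is a set of clauses. -/
abbrev CNF := Set Clause

/-- The variables occurring in a clause. -/
def Clause.vars (C : Clause) : Set Var := {v | ∃ b, (v, b) ∈ C}

/-- The variables occurring in a formula. -/
def CNF.vars (F : CNF) : Set Var := ⋃ C ∈ F, Clause.vars C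

/-- An assignment satisfies a formula if every clause contains a true literal. -/
def Satisfies (a : Var → Bool) (F : CNF) : Prop := ∀ C ∈ F, ∃ l ∈ C, a l.1 = l.2

/-- A formula is satisfiable. -/
def Sat (F : CNF) : Prop := ∃ a, Satisfies a F

/-- Simplification of `F` under the assignment of value `b` to variable `x`:
clauses containing the satisfied literal are removed, and the falsified literal
is deleted from the remaining clauses. -/
def restrict (F : CNF) (x : Var) (b : Bool) : CNF :=
  {C' | ∃ C ∈ F, (x, b) ∉ C ∧ C' = {l ∈ C | l.1 ≠ x}}

/-- Binary trees with variable-labelled nodes. -/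
inductive BTree where
  | nil : BTree
  | node : Var → BTree → BTree → BTree

/-- Number of nodes of a tree. -/
def BTree.size : BTree → ℕ
  | .nil => 0
  | .node _ l r => l.size + r.size + 1

/-- Backtracking search trees (BST) of a formula: the empty tree if the
formula contains the empty clause, and otherwise a node labelled by a
variable of the formula, with subtrees BSTs of the two simplifications. -/
inductive IsBST : CNF → BTree → Prop where
  | nil {F : CNF} : (∅ : Clause) ∈ F → IsBST F .nil
  | node {F : CNF} {x : Var} {l r : BTree} :
      (∅ : Clause) ∉ F → x ∈ CNF.vars F →
      IsBST (restrict F x false) l → IsBST (restrict F x true) r →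
      IsBST F (.node x l r)

/-- The minimal size of a backtracking search tree of `F`. -/
noncomputable def bstSize (F : CNF) : ℕ := sInf {n | ∃ T, IsBST F T ∧ T.size = n}

/-- `l ∨ F`: disjoin the literal `l` with every clause of `F`. -/
def ldisj (l : Lit) (F : CNF) : CNF := {C' | ∃ C ∈ F, C' = insert l C}

/-- The sum `F +ₓ H = (x ∨ F) ∪ (¬x ∨ H)`. -/
def fsum (x : Var) (F H : CNF) : CNF := ldisj (x, true) F ∪ ldisj (x, false) H

/-- The product `F · H = {γ ∨ δ | γ ∈ F, δ ∈ H}`. -/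
def fprod (F H : CNF) : CNF := {E | ∃ γ ∈ F, ∃ δ ∈ H, E = γ ∪ δ}

/-- Graft a copy of `T₂` at every empty-subtree position of `T₁`. -/
def BTree.graft : BTree → BTree → BTree
  | .nil, T₂ => T₂
  | .node x l r, T₂ => .node x (l.graft T₂) (r.graft T₂)

/-- `T` is a minimal-size backtracking search tree of `F`. -/
def OptimalBST (F : CNF) (T : BTree) : Prop :=
  IsBST F T ∧ ∀ T', IsBST F T' → T.size ≤ T'.size
section Helpers

lemma mem_vars_iff {F : CNF} {x : Var} :
    x ∈ CNF.vars F ↔ ∃ C ∈ F, ∃ b, (x, b) ∈ C := by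
  simp [CNF.vars, Clause.vars]

lemma lit_ne_of_notMem_vars {H : CNF} {x : Var} (h : x ∉ CNF.vars H)
    {C : Clause} (hC : C ∈ H) : ∀ l ∈ C, l.1 ≠ x := by
  rintro ⟨v, b⟩ hl rfl
  exact h (mem_vars_iff.mpr ⟨C, hC, b, hl⟩)

lemma empty_mem_fprod {F H : CNF} :
    (∅ : Clause) ∈ fprod F H ↔ (∅ : Clause) ∈ F ∧ (∅ : Clause) ∈ H := by
  constructor
  · rintro ⟨γ, hγ, δ, hδ, h⟩
    rcases Set.union_empty_iff.mp h.symm with ⟨rfl, rfl⟩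
    exact ⟨hγ, hδ⟩
  · rintro ⟨h1, h2⟩
    exact ⟨∅, h1, ∅, h2, by simp⟩

lemma vars_fprod_subset {F H : CNF} :
    CNF.vars (fprod F H) ⊆ CNF.vars F ∪ CNF.vars H := by
  intro x hx
  rcases mem_vars_iff.mp hx with ⟨C, ⟨γ, hγ, δ, hδ, rfl⟩, b, hb⟩
  rcases hb with hb | hb
  · exact Or.inl (mem_vars_iff.mpr ⟨γ, hγ, b, hb⟩)
  · exact Or.inr (mem_vars_iff.mpr ⟨δ, hδ, b, hb⟩)

lemma vars_restrict_subset {F : CNF} {x : Var} {b : Bool} :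
    CNF.vars (restrict F x b) ⊆ CNF.vars F := by
  intro y hy
  rcases mem_vars_iff.mp hy with ⟨C', ⟨C, hC, _, rfl⟩, c, hc⟩
  exact mem_vars_iff.mpr ⟨C, hC, c, hc.1⟩

lemma restrict_eq_of_notMem_vars {F : CNF} {x : Var} {b : Bool}
    (h : x ∉ CNF.vars F) : restrict F x b = F := by
  ext C
  constructor
  · rintro ⟨C₀, hC₀, _, rfl⟩
    have : {l ∈ C₀ | l.1 ≠ x} = C₀ := by
      ext l; simp only [Set.mem_setOf_eq, Set.mem_sep_iff]
      exact ⟨fun h => h.1, fun hl => ⟨hl, lit_ne_of_notMem_vars h hC₀ l hl⟩⟩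
    rwa [this]
  · intro hC
    refine ⟨C, hC, fun hb => h (mem_vars_iff.mpr ⟨C, hC, b, hb⟩), ?_⟩
    ext l; simp only [Set.mem_setOf_eq]
    exact ⟨fun hl => ⟨hl, lit_ne_of_notMem_vars h hC l hl⟩, fun hl => hl.1⟩

lemma filter_union {γ δ : Clause} {x : Var} (h : ∀ l ∈ δ, l.1 ≠ x) :
    {l ∈ γ ∪ δ | l.1 ≠ x} = {l ∈ γ | l.1 ≠ x} ∪ δ := by
  ext l
  simp only [Set.mem_setOf_eq, Set.mem_union]
  constructor
  · rintro ⟨hl | hl, hne⟩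
    · exact Or.inl ⟨hl, hne⟩
    · exact Or.inr hl
  · rintro (⟨hl, hne⟩ | hl)
    · exact ⟨Or.inl hl, hne⟩
    · exact ⟨Or.inr hl, h l hl⟩

lemma restrict_fprod_left {F H : CNF} {x : Var} {b : Bool}
    (hx : x ∉ CNF.vars H) :
    restrict (fprod F H) x b = fprod (restrict F x b) H := by
  ext C'
  constructor
  · rintro ⟨C, ⟨γ, hγ, δ, hδ, rfl⟩, hxb, rfl⟩
    exact ⟨{l ∈ γ | l.1 ≠ x}, ⟨γ, hγ, fun h => hxb (Or.inl h), rfl⟩, δ, hδ,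
      filter_union (lit_ne_of_notMem_vars hx hδ)⟩
  · rintro ⟨γ', ⟨γ, hγ, hxb, rfl⟩, δ, hδ, rfl⟩
    refine ⟨γ ∪ δ, ⟨γ, hγ, δ, hδ, rfl⟩, ?_, (filter_union (lit_ne_of_notMem_vars hx hδ)).symm⟩
    rintro (h | h)
    · exact hxb h
    · exact lit_ne_of_notMem_vars hx hδ (x, b) h rfl

lemma restrict_fprod_right {F H : CNF} {x : Var} {b : Bool}
    (hx : x ∉ CNF.vars F) :
    restrict (fprod F H) x b = fprod F (restrict H x b) := by
  have comm : ∀ (A B : CNF), fprod A B = fprod B A := by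
    intro A B; ext C
    constructor
    · rintro ⟨γ, hγ, δ, hδ, rfl⟩; exact ⟨δ, hδ, γ, hγ, Set.union_comm _ _⟩
    · rintro ⟨γ, hγ, δ, hδ, rfl⟩; exact ⟨δ, hδ, γ, hγ, Set.union_comm _ _⟩
  rw [comm F H, comm F (restrict H x b), restrict_fprod_left hx]

end Helpers
section Main

lemma restrict_comm_subset {F : CNF} {x y : Var} {b c : Bool} (hne : y ≠ x) :
    restrict (restrict F x b) y c ⊆ restrict (restrict F y c) x b := by
  rintro C' ⟨D, ⟨C, hC, hxb, rfl⟩, hyc, rfl⟩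
  have hycC : (y, c) ∉ C := fun h => hyc ⟨h, hne⟩
  refine ⟨{l ∈ C | l.1 ≠ y}, ⟨C, hC, hycC, rfl⟩, fun h => hxb h.1, ?_⟩
  ext l
  simp only [Set.mem_setOf_eq]
  tauto

lemma restrict_comm {F : CNF} {x y : Var} {b c : Bool} (hne : y ≠ x) :
    restrict (restrict F x b) y c = restrict (restrict F y c) x b :=
  le_antisymm (restrict_comm_subset hne) (restrict_comm_subset hne.symm)

lemma empty_mem_restrict {F : CNF} {x : Var} {b : Bool} (h : (∅ : Clause) ∈ F) :
    (∅ : Clause) ∈ restrict F x b :=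
  ⟨∅, h, Set.notMem_empty _, by ext l; simp⟩

lemma isBST_restrict {F : CNF} {T : BTree} (h : IsBST F T) :
    ∀ x b, ∃ T', IsBST (restrict F x b) T' ∧ T'.size ≤ T.size := by
  induction h with
  | nil hF =>
    intro x b
    exact ⟨.nil, .nil (empty_mem_restrict hF), le_rfl⟩
  | @node F x l r hne hx hbl hbr ihl ihr =>
    intro y c
    by_cases hxy : y = x
    · subst hxy
      cases c with
      | false => exact ⟨l, hbl, by simp [BTree.size]; omega⟩
      | true => exact ⟨r, hbr, by simp [BTree.size]; omega⟩
    · by_cases hG : (∅ : Clause) ∈ restrict F y c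
      · exact ⟨.nil, .nil hG, Nat.zero_le _⟩
      · obtain ⟨Tl, hTl, sl⟩ := ihl y c
        obtain ⟨Tr, hTr, sr⟩ := ihr y c
        rw [restrict_comm hxy] at hTl hTr
        by_cases hxG : x ∈ CNF.vars (restrict F y c)
        · exact ⟨.node x Tl Tr, .node hG hxG hTl hTr, by simp [BTree.size]; omega⟩
        · rw [restrict_eq_of_notMem_vars hxG] at hTl
          exact ⟨Tl, hTl, by simp [BTree.size]; omega⟩

lemma bstSize_le {F : CNF} {T : BTree} (h : IsBST F T) : bstSize F ≤ T.size :=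
  Nat.sInf_le ⟨T, h, rfl⟩

lemma exists_optimal {F : CNF} (h : ∃ T, IsBST F T) :
    ∃ T, IsBST F T ∧ T.size = bstSize F := by
  obtain ⟨T, hT⟩ := h
  exact Nat.sInf_mem (⟨T.size, T, hT, rfl⟩ : Set.Nonempty {n | ∃ T, IsBST F T ∧ T.size = n})

lemma bstSize_node_bound {F : CNF} {x : Var} (hx : x ∈ CNF.vars F)
    (hex : ∃ T, IsBST F T) :
    bstSize F ≤ bstSize (restrict F x false) + bstSize (restrict F x true) + 1 := by
  by_cases hF : (∅ : Clause) ∈ F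
  · have h0 : bstSize F = 0 := Nat.le_zero.mp (bstSize_le (.nil hF))
    omega
  · obtain ⟨T, hT⟩ := hex
    obtain ⟨O₀, hO₀, hs₀⟩ := exists_optimal ((isBST_restrict hT x false).imp fun _ h => h.1)
    obtain ⟨O₁, hO₁, hs₁⟩ := exists_optimal ((isBST_restrict hT x true).imp fun _ h => h.1)
    have := bstSize_le (IsBST.node hF hx hO₀ hO₁)
    simp only [BTree.size] at this
    omega

lemma isBST_fprod_of_empty {H : CNF} {T : BTree} (h : IsBST H T) :
    ∀ F : CNF, Disjoint (CNF.vars F) (CNF.vars H) → (∅ : Clause) ∈ F →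
      IsBST (fprod F H) T := by
  induction h with
  | nil hH =>
    intro F _ hF
    exact .nil (empty_mem_fprod.mpr ⟨hF, hH⟩)
  | @node H x l r hne hx hbl hbr ihl ihr =>
    intro F hd hF
    have hxF : x ∉ CNF.vars F := fun h => Set.disjoint_left.mp hd h hx
    obtain ⟨δ, hδ, b, hb⟩ := mem_vars_iff.mp hx
    refine .node (fun h => hne (empty_mem_fprod.mp h).2) ?_ ?_ ?_
    · exact mem_vars_iff.mpr ⟨∅ ∪ δ, ⟨∅, hF, δ, hδ, rfl⟩, b, Or.inr hb⟩
    · rw [restrict_fprod_right hxF]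
      exact ihl F (hd.mono_right vars_restrict_subset) hF
    · rw [restrict_fprod_right hxF]
      exact ihr F (hd.mono_right vars_restrict_subset) hF

lemma isBST_fprod {F : CNF} {T : BTree} (h : IsBST F T) :
    ∀ (H : CNF) (T₂ : BTree), Disjoint (CNF.vars F) (CNF.vars H) →
      IsBST H T₂ → H.Nonempty → IsBST (fprod F H) (T.graft T₂) := by
  induction h with
  | @nil F hF =>
    intro H T₂ hd hT₂ _
    exact isBST_fprod_of_empty hT₂ F hd hF
  | @node F x l r hne hx hbl hbr ihl ihr =>
    intro H T₂ hd hT₂ hne'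
    have hxH : x ∉ CNF.vars H := Set.disjoint_left.mp hd hx
    obtain ⟨γ, hγ, b, hb⟩ := mem_vars_iff.mp hx
    obtain ⟨δ, hδ⟩ := hne'
    refine .node (fun h => hne (empty_mem_fprod.mp h).1) ?_ ?_ ?_
    · exact mem_vars_iff.mpr ⟨γ ∪ δ, ⟨γ, hγ, δ, hδ, rfl⟩, b, Or.inl hb⟩
    · rw [restrict_fprod_left hxH]
      exact ihl H T₂ (hd.mono_left vars_restrict_subset) hT₂ ⟨δ, hδ⟩
    · rw [restrict_fprod_left hxH]
      exact ihr H T₂ (hd.mono_left vars_restrict_subset) hT₂ ⟨δ, hδ⟩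

lemma graft_size (T₁ T₂ : BTree) :
    (T₁.graft T₂).size = T₁.size + (T₁.size + 1) * T₂.size := by
  induction T₁ with
  | nil => simp [BTree.graft, BTree.size]
  | node x l r ihl ihr =>
    simp only [BTree.graft, BTree.size, ihl, ihr]
    ring

lemma fprod_lower (T : BTree) :
    ∀ (F H : CNF), IsBST (fprod F H) T → Disjoint (CNF.vars F) (CNF.vars H) →
      (∃ T', IsBST F T') → (∃ T', IsBST H T') →
      bstSize F + (bstSize F + 1) * bstSize H ≤ T.size := by
  induction T with
  | nil =>
    intro F H hT hd _ _
    cases hT with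
    | nil h =>
      obtain ⟨h1, h2⟩ := empty_mem_fprod.mp h
      have e1 : bstSize F = 0 := Nat.le_zero.mp (bstSize_le (.nil h1))
      have e2 : bstSize H = 0 := Nat.le_zero.mp (bstSize_le (.nil h2))
      simp [e1, e2, BTree.size]
  | node x L R ihL ihR =>
    intro F H hT hd hexF hexH
    cases hT with
    | node hne hx hbl hbr =>
      simp only [BTree.size]
      rcases vars_fprod_subset hx with hxF | hxH
      · have hxnH : x ∉ CNF.vars H := Set.disjoint_left.mp hd hxF
        rw [restrict_fprod_left hxnH] at hbl hbr
        obtain ⟨TF, hTF⟩ := hexF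
        have hex0 : ∃ T', IsBST (restrict F x false) T' :=
          (isBST_restrict hTF x false).imp fun _ h => h.1
        have hex1 : ∃ T', IsBST (restrict F x true) T' :=
          (isBST_restrict hTF x true).imp fun _ h => h.1
        have h1 := ihL _ _ hbl (hd.mono_left vars_restrict_subset) hex0 hexH
        have h2 := ihR _ _ hbr (hd.mono_left vars_restrict_subset) hex1 hexH
        have h3 := bstSize_node_bound hxF ⟨TF, hTF⟩
        nlinarith [h1, h2, h3]
      · have hxnF : x ∉ CNF.vars F := fun h => Set.disjoint_left.mp hd h hxH
        rw [restrict_fprod_right hxnF] at hbl hbr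
        obtain ⟨TH, hTH⟩ := hexH
        have hex0 : ∃ T', IsBST (restrict H x false) T' :=
          (isBST_restrict hTH x false).imp fun _ h => h.1
        have hex1 : ∃ T', IsBST (restrict H x true) T' :=
          (isBST_restrict hTH x true).imp fun _ h => h.1
        have h1 := ihL _ _ hbl (hd.mono_right vars_restrict_subset) hexF hex0
        have h2 := ihR _ _ hbr (hd.mono_right vars_restrict_subset) hexF hex1
        have h3 := bstSize_node_bound hxH ⟨TH, hTH⟩
        nlinarith [h1, h2, h3]

end Main
/-- For unsatisfiable variable-disjoint `F` and `H`, grafting an optimal BST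
of `H` at every empty subtree of an optimal BST of `F` yields an optimal BST
of the product `F · H`. -/
theorem optimalBST_fprod (F H : CNF)
    (hdisj : Disjoint (CNF.vars F) (CNF.vars H))
    (hF : ¬ Sat F) (hH : ¬ Sat H)
    (T₁ T₂ : BTree) (h₁ : OptimalBST F T₁) (h₂ : OptimalBST H T₂) :
    OptimalBST (fprod F H) (T₁.graft T₂) := by
  have hHne : H.Nonempty := by
    rw [Set.nonempty_iff_ne_empty]
    rintro rfl
    exact hH ⟨fun _ => true, fun C hC => absurd hC (Set.notMem_empty _)⟩
  have e1 : T₁.size = bstSize F :=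
    le_antisymm (by obtain ⟨O, hO, hs⟩ := exists_optimal ⟨T₁, h₁.1⟩; rw [← hs]; exact h₁.2 O hO)
      (bstSize_le h₁.1)
  have e2 : T₂.size = bstSize H :=
    le_antisymm (by obtain ⟨O, hO, hs⟩ := exists_optimal ⟨T₂, h₂.1⟩; rw [← hs]; exact h₂.2 O hO)
      (bstSize_le h₂.1)
  refine ⟨isBST_fprod h₁.1 H T₂ hdisj h₂.1 hHne, ?_⟩
  intro T' hT'
  rw [graft_size, e1, e2]
  exact fprod_lower T' F H hT' hdisj ⟨T₁, h₁.1⟩ ⟨T₂, h₂.1⟩
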